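/- arXiv:2512.07728 — 3 statements merged into one kernel-verified Lean document; each statement's English description precedes it below -/
import Mathlib

section
/- Let π be a polygonal curve with vertices p_1, ..., p_n and let s = [π(1), π(n)] be the segment connecting its endpoints. If every vertex of π lies within distance μ of s (as a set), and the projections of the vertices onto s are monotone along s, then D_F(π, s) ≤ μ. -/
noncomputable def clamp (x : ℝ) : ℝ := min 1 (max 0 x)

lemma clamp_mono : Monotone clamp := fun a b h =>
  min_le_min le_rfl (max_le_max le_rfl h)

lemma clamp_cont : Continuous clamp :=
  continuous_const.min (continuous_const.max continuous_id)

lemma clamp_of_nonpos {x : ℝ} (h : x ≤ 0) : clamp x = 0 := by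
  rw [clamp, max_eq_left h, min_eq_right zero_le_one]

lemma clamp_of_one_le {x : ℝ} (h : 1 ≤ x) : clamp x = 1 := by
  rw [clamp, max_eq_right (le_trans zero_le_one h), min_eq_left h]

lemma clamp_of_mem {x : ℝ} (h0 : 0 ≤ x) (h1 : x ≤ 1) : clamp x = x := by
  rw [clamp, max_eq_right h0, min_eq_right h1]

lemma pl_eval (T : ℕ → ℝ) (n : ℕ) (τ : ℝ) (h0 : 0 ≤ τ) (h1 : τ ≤ n) :
    T 0 + ∑ k ∈ Finset.range n, (T (k+1) - T k) * clamp (τ - k)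
      = (1 - Int.fract τ) * T (min ⌊τ⌋.toNat n) + Int.fract τ * T (min (⌊τ⌋.toNat + 1) n) := by
  have hfl0 : (0:ℤ) ≤ ⌊τ⌋ := Int.floor_nonneg.mpr h0
  set j := ⌊τ⌋.toNat with hj
  have hjz : ((j:ℤ) : ℝ) = ((⌊τ⌋ : ℤ) : ℝ) := by
    rw [hj, Int.toNat_of_nonneg hfl0]
  have hjc : (j : ℝ) = ((⌊τ⌋ : ℤ) : ℝ) := by push_cast at hjz ⊢; exact hjz
  have hjle : (j:ℝ) ≤ τ := by rw [hjc]; exact Int.floor_le τ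
  have hjlt : τ < j + 1 := by rw [hjc]; exact Int.lt_floor_add_one τ
  have hfract : Int.fract τ = τ - j := by rw [Int.fract, hjc]
  rcases lt_or_ge j n with hlt | hge
  · have hmin1 : min j n = j := min_eq_left hlt.le
    have hmin2 : min (j+1) n = j+1 := min_eq_left hlt
    rw [hmin1, hmin2]
    have hsub : Finset.range (j+1) ⊆ Finset.range n := Finset.range_subset_range.mpr hlt
    have hzero : ∀ k ∈ Finset.range n, k ∉ Finset.range (j+1) →
        (T (k+1) - T k) * clamp (τ - k) = 0 := by
      intro k _ hk
      have h1k : j + 1 ≤ k := by simpa using hk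
      have h2k : τ - k ≤ 0 := by
        have : (j:ℝ) + 1 ≤ k := by exact_mod_cast h1k
        linarith
      rw [clamp_of_nonpos h2k, mul_zero]
    rw [← Finset.sum_subset hsub hzero, Finset.sum_range_succ]
    have hmid : clamp (τ - j) = Int.fract τ := by
      rw [hfract]; exact clamp_of_mem (by linarith) (by linarith)
    have hones : ∀ k ∈ Finset.range j, (T (k+1) - T k) * clamp (τ - k) = T (k+1) - T k := by
      intro k hk
      have hk' : k + 1 ≤ j := Finset.mem_range.mp hk
      have : (1:ℝ) ≤ τ - k := by
        have : ((k:ℝ) + 1) ≤ j := by exact_mod_cast hk'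
        linarith
      rw [clamp_of_one_le this, mul_one]
    rw [Finset.sum_congr rfl hones, Finset.sum_range_sub, hmid]
    ring
  · have hjn : j = n := le_antisymm (by exact_mod_cast hjle.trans h1) hge
    have hτ : τ = n := le_antisymm h1 (by rw [← hjn]; exact hjle)
    have hfr : Int.fract τ = 0 := by rw [hfract, hτ, hjn]; ring
    have hones : ∀ k ∈ Finset.range n, (T (k+1) - T k) * clamp (τ - k) = T (k+1) - T k := by
      intro k hk
      have hk' := Finset.mem_range.mp hk
      have : (1:ℝ) ≤ τ - k := by
        have : (k:ℝ) + 1 ≤ n := by exact_mod_cast hk'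
        rw [hτ]; linarith
      rw [clamp_of_one_le this, mul_one]
    rw [Finset.sum_congr rfl hones, Finset.sum_range_sub, hfr, hjn]
    simp [min_eq_right (Nat.le_succ n)]




/-- A traversal of a pair of curves: a pair of continuous, monotone maps on `[0,1]`
with prescribed endpoints `α 0 = a`, `α 1 = b`, `β 0 = c`, `β 1 = e`. -/
structure Traversal (a b c e : ℝ) where
  α : ℝ → ℝ
  β : ℝ → ℝ
  contα : ContinuousOn α (Set.Icc 0 1)
  monoα : MonotoneOn α (Set.Icc 0 1)
  α0 : α 0 = a
  α1 : α 1 = b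
  contβ : ContinuousOn β (Set.Icc 0 1)
  monoβ : MonotoneOn β (Set.Icc 0 1)
  β0 : β 0 = c
  β1 : β 1 = e

/-- The continuous Fréchet distance between curves `f : [a,b] → ℝ^d` and `g : [c,e] → ℝ^d`. -/
noncomputable def frechet {d : ℕ} (a b c e : ℝ) (f g : ℝ → EuclideanSpace ℝ (Fin d)) : ℝ :=
  sInf {r | ∃ T : Traversal a b c e, ∀ t ∈ Set.Icc (0:ℝ) 1,
    dist (f (T.α t)) (g (T.β t)) ≤ r}

/-- The polygonal curve through the points `p 0, …, p n`, parametrised over `[0, n]`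
by linear interpolation. -/
noncomputable def interp {d n : ℕ} (p : Fin (n+1) → EuclideanSpace ℝ (Fin d)) (t : ℝ) :
    EuclideanSpace ℝ (Fin d) :=
  (1 - Int.fract t) • p ⟨min ⌊t⌋.toNat n, Nat.lt_succ_of_le (min_le_right _ _)⟩
    + Int.fract t • p ⟨min (⌊t⌋.toNat + 1) n, Nat.lt_succ_of_le (min_le_right _ _)⟩

/-- if every vertex of the polygonal curve `p` lies within
distance `μ` of the segment `s` joining its endpoints (witnessed by nearest-point
projection parameters `t k`), and these projection parameters are monotone along
`s`, then the Fréchet distance between the curve and the segment is at most `μ`. -/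
theorem frechet_to_segment_le {d n : ℕ}
    (p : Fin (n+1) → EuclideanSpace ℝ (Fin d)) (μ : ℝ)
    (t : Fin (n+1) → ℝ) (hmono : Monotone t)
    (hrange : ∀ k, t k ∈ Set.Icc (0:ℝ) 1)
    (hproj : ∀ k, ∀ u ∈ Set.Icc (0:ℝ) 1,
      dist (p k) (p 0 + t k • (p (Fin.last n) - p 0)) ≤
        dist (p k) (p 0 + u • (p (Fin.last n) - p 0)))
    (hclose : ∀ k, dist (p k) (p 0 + t k • (p (Fin.last n) - p 0)) ≤ μ) :
    frechet 0 (n : ℝ) 0 1 (interp p)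
      (fun u : ℝ => p 0 + u • (p (Fin.last n) - p 0)) ≤ μ := by
  have hμ0 : 0 ≤ μ := le_trans dist_nonneg (hclose 0)
  have hbdd : BddBelow {r | ∃ T : Traversal 0 (n:ℝ) 0 1, ∀ t ∈ Set.Icc (0:ℝ) 1,
      dist (interp p (T.α t)) ((fun u : ℝ => p 0 + u • (p (Fin.last n) - p 0)) (T.β t)) ≤ r} := by
    refine ⟨0, fun r hr => ?_⟩
    obtain ⟨T, hT⟩ := hr
    exact le_trans dist_nonneg (hT 0 ⟨le_rfl, zero_le_one⟩)
  rcases Nat.eq_zero_or_pos n with hn | hn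
  · subst hn
    apply csInf_le hbdd
    refine ⟨⟨fun _ => 0, fun u => u, continuousOn_const, monotoneOn_const,
      rfl, by norm_num, continuous_id.continuousOn, fun a _ b _ h => h, rfl, rfl⟩, ?_⟩
    intro u _
    have hlast : p (Fin.last 0) = p 0 := by norm_num [Fin.last]
    simp only [hlast, sub_self, smul_zero, add_zero]
    have h0 : interp p ((0:ℝ)) = p 0 := by
      simp [interp, Int.fract_zero]
    rw [h0]
    simpa using hμ0
  · set v := p (Fin.last n) - p 0 with hv
    set T : ℕ → ℝ := fun k => if k = 0 then 0 else if n ≤ k then 1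
      else t ⟨min k n, Nat.lt_succ_of_le (min_le_right _ _)⟩ with hTdef
    have hT0 : T 0 = 0 := if_pos rfl
    have hTn : T n = 1 := by
      rw [hTdef]; simp only
      rw [if_neg hn.ne', if_pos le_rfl]
    have hT01 : ∀ k, 0 ≤ T k ∧ T k ≤ 1 := by
      intro k
      rw [hTdef]; simp only
      by_cases hk0 : k = 0
      · simp [hk0]
      · rw [if_neg hk0]
        by_cases hkn : n ≤ k
        · simp [hkn]
        · rw [if_neg hkn]
          exact ⟨(hrange _).1, (hrange _).2⟩
    have hTmono : Monotone T := by
      intro a b hab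
      by_cases ha0 : a = 0
      · rw [ha0, hT0]; exact (hT01 b).1
      · have hb0 : b ≠ 0 := fun h => ha0 (Nat.le_zero.mp (h ▸ hab))
        by_cases hbn : n ≤ b
        · have hb1 : T b = 1 := by rw [hTdef]; simp only; rw [if_neg hb0, if_pos hbn]
          rw [hb1]; exact (hT01 a).2
        · have han : ¬ n ≤ a := fun h => hbn (h.trans hab)
          rw [hTdef]; simp only
          rw [if_neg ha0, if_neg han, if_neg hb0, if_neg hbn]
          exact hmono (by simp only [Fin.mk_le_mk]; exact min_le_min hab le_rfl)
    have hclose' : ∀ (k : ℕ) (hk : k ≤ n),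
        dist (p ⟨k, Nat.lt_succ_of_le hk⟩) (p 0 + T k • v) ≤ μ := by
      intro k hk
      by_cases hk0 : k = 0
      · subst hk0
        rw [hT0, zero_smul, add_zero]
        have : (⟨0, Nat.lt_succ_of_le hk⟩ : Fin (n+1)) = 0 := rfl
        rw [this, dist_self]; exact hμ0
      · by_cases hkn : n ≤ k
        · have hkeq : k = n := le_antisymm hk hkn
          have hTk : T k = 1 := by rw [hTdef]; simp only; rw [if_neg hk0, if_pos hkn]
          rw [hTk, one_smul, hv, add_sub_cancel]
          have : (⟨k, Nat.lt_succ_of_le hk⟩ : Fin (n+1)) = Fin.last n := by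
            simp [Fin.ext_iff, hkeq, Fin.last]
          rw [this, dist_self]; exact hμ0
        · have hTk : T k = t ⟨min k n, Nat.lt_succ_of_le (min_le_right _ _)⟩ := by
            rw [hTdef]; simp only; rw [if_neg hk0, if_neg hkn]
          have hfe : (⟨min k n, Nat.lt_succ_of_le (min_le_right _ _)⟩ : Fin (n+1))
              = ⟨k, Nat.lt_succ_of_le hk⟩ := by
            simp [Fin.ext_iff, min_eq_left hk]
          rw [hTk, hfe]
          exact hclose _
    apply csInf_le hbdd
    refine ⟨⟨fun u => (n:ℝ) * u,
      fun u => T 0 + ∑ k ∈ Finset.range n, (T (k+1) - T k) * clamp ((n:ℝ)*u - k),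
      (continuous_const.mul continuous_id).continuousOn,
      fun a _ b _ hab => mul_le_mul_of_nonneg_left hab (Nat.cast_nonneg n),
      mul_zero _, mul_one _, ?_, ?_, ?_, ?_⟩, ?_⟩
    · exact (continuous_const.add (continuous_finset_sum _ fun k _ =>
        continuous_const.mul (clamp_cont.comp
          ((continuous_const.mul continuous_id).sub continuous_const)))).continuousOn
    · intro a _ b _ hab
      apply add_le_add le_rfl
      apply Finset.sum_le_sum
      intro k _
      refine mul_le_mul_of_nonneg_left (clamp_mono ?_) (sub_nonneg.mpr (hTmono (Nat.le_succ k)))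
      have : (n:ℝ) * a ≤ (n:ℝ) * b := mul_le_mul_of_nonneg_left hab (Nat.cast_nonneg n)
      linarith
    · show T 0 + ∑ k ∈ Finset.range n, (T (k+1) - T k) * clamp ((n:ℝ)*0 - k) = 0
      rw [hT0, Finset.sum_eq_zero, add_zero]
      intro k _
      rw [clamp_of_nonpos (by simp), mul_zero]
    · show T 0 + ∑ k ∈ Finset.range n, (T (k+1) - T k) * clamp ((n:ℝ)*1 - k) = 1
      rw [pl_eval T n ((n:ℝ)*1) (by positivity) (by rw [mul_one]), mul_one]
      have h1 : (⌊(n:ℝ)⌋).toNat = n := by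
        rw [Int.floor_natCast, Int.toNat_natCast]
      rw [h1, Int.fract_natCast, min_self, min_eq_right (Nat.le_succ n), hTn]
      ring
    · intro u hu
      obtain ⟨hu0, hu1⟩ := hu
      show dist (interp p ((n:ℝ)*u))
        (p 0 + (T 0 + ∑ k ∈ Finset.range n, (T (k+1) - T k) * clamp ((n:ℝ)*u - k)) • v) ≤ μ
      set τ := (n:ℝ) * u with hτdef
      have hτ0 : 0 ≤ τ := mul_nonneg (Nat.cast_nonneg n) hu0
      have hτn : τ ≤ n := by
        calc τ ≤ (n:ℝ) * 1 := mul_le_mul_of_nonneg_left hu1 (Nat.cast_nonneg n)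
        _ = n := mul_one _
      rw [pl_eval T n τ hτ0 hτn]
      set lam := Int.fract τ with hlam
      have hl0 : 0 ≤ lam := Int.fract_nonneg τ
      have hl1 : lam ≤ 1 := (Int.fract_lt_one τ).le
      set a := min (⌊τ⌋).toNat n with ha
      set b := min ((⌊τ⌋).toNat + 1) n with hb
      have hseg : p 0 + ((1 - lam) * T a + lam * T b) • v
          = (1 - lam) • (p 0 + T a • v) + lam • (p 0 + T b • v) := by
        module
      rw [hseg]
      have hinterp : interp p τ = (1 - lam) • p ⟨a, Nat.lt_succ_of_le (min_le_right _ _)⟩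
          + lam • p ⟨b, Nat.lt_succ_of_le (min_le_right _ _)⟩ := rfl
      rw [hinterp]
      have hda := hclose' a (min_le_right _ _)
      have hdb := hclose' b (min_le_right _ _)
      calc dist ((1 - lam) • p ⟨a, _⟩ + lam • p ⟨b, _⟩)
            ((1 - lam) • (p 0 + T a • v) + lam • (p 0 + T b • v))
          ≤ dist ((1 - lam) • p ⟨a, Nat.lt_succ_of_le (min_le_right _ _)⟩)
              ((1 - lam) • (p 0 + T a • v))
            + dist (lam • p ⟨b, Nat.lt_succ_of_le (min_le_right _ _)⟩)
              (lam • (p 0 + T b • v)) := dist_add_add_le _ _ _ _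
        _ = (1 - lam) * dist (p ⟨a, Nat.lt_succ_of_le (min_le_right _ _)⟩) (p 0 + T a • v)
            + lam * dist (p ⟨b, Nat.lt_succ_of_le (min_le_right _ _)⟩) (p 0 + T b • v) := by
            rw [dist_smul₀, dist_smul₀, Real.norm_eq_abs, Real.norm_eq_abs,
              abs_of_nonneg (by linarith), abs_of_nonneg hl0]
        _ ≤ (1 - lam) * μ + lam * μ := by
            refine add_le_add (mul_le_mul_of_nonneg_left hda (by linarith))
              (mul_le_mul_of_nonneg_left hdb hl0)
        _ = μ := by ring
end

section
/- Let π = (p_1,…,p_n) be a polygonal curve and s the segment from p_1 to p_n parametrised as s(t) = p_1 + t(p_n − p_1), t ∈ [0,1]. For each k let t_k ∈ [0,1] minimise d(p_k, s(t)). Define the matching that sends p_k to s(max_{k' ≤ k} t_{k'}). Then the Fréchet distance realised by this matching is at most 2 · D_F(π, s); i.e., max_k d(p_k, s(max_{k'≤k} t_{k'})) ≤ 2 · D_F(π, s). -/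
/-!
Fix a traversal keeping the curve within `r` of the segment `s`, let `k₀ ≤ k` be an index
realising the running maximum `M = t k₀`, and let `β₀ ≤ β₁` be the segment parameters the
traversal matches with `p k₀` and `p k`. If `M ≤ β₁`, then `s M` lies between `s (t k)` and
`s β₁`, and distances from `p k` are convex along the segment, so `|p k, s M| ≤ |p k, s β₁| ≤ r`.
If `β₁ < M`, then `s β₁` lies between `s β₀` and `s M = s (t k₀)`, and in an inner product
space moving a point to its nearest point in a convex set brings it closer to the whole set, so
`|s β₁, s M| ≤ |s β₀, s (t k₀)| ≤ |p k₀, s β₀| ≤ r`; the triangle inequality gives `2 r`.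
-/

open Set AffineMap

section NearestPoint

lemma dist_le_of_mem_segment {E : Type*} [SeminormedAddCommGroup E] [NormedSpace ℝ E]
    {x q y z : E} (hq : dist x q ≤ dist x y) (hz : z ∈ segment ℝ q y) :
    dist x z ≤ dist x y :=
  Metric.mem_closedBall'.1 <| (convex_closedBall x (dist x y)).segment_subset
    (Metric.mem_closedBall'.2 hq) (Metric.mem_closedBall'.2 le_rfl) hz

variable {E : Type*} [NormedAddCommGroup E] [InnerProductSpace ℝ E]

lemma Convex.dist_le_of_forall_dist_le {K : Set E} (hK : Convex ℝ K) {x q y : E} (hq : q ∈ K)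
    (hmin : ∀ w ∈ K, dist x q ≤ dist x w) (hy : y ∈ K) : dist q y ≤ dist x y := by
  have : Nonempty K := ⟨⟨q, hq⟩⟩
  have hinf : ‖x - q‖ = ⨅ w : K, ‖x - w‖ :=
    le_antisymm (le_ciInf fun w => by simpa only [dist_eq_norm] using hmin w w.2)
      (ciInf_le (f := fun w : K => ‖x - w‖) ⟨0, by rintro _ ⟨w, rfl⟩; exact norm_nonneg _⟩
        ⟨q, hq⟩)
  have hobtuse := (norm_eq_iInf_iff_real_inner_le_zero hK hq).1 hinf y hy
  have hexpand : ‖x - y‖ ^ 2 = ‖x - q‖ ^ 2 - 2 * inner ℝ (x - q) (y - q) + ‖y - q‖ ^ 2 := by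
    rw [← norm_sub_sq_real, sub_sub_sub_cancel_right]
  have hsq : ‖y - q‖ ^ 2 ≤ ‖x - y‖ ^ 2 := by nlinarith [sq_nonneg ‖x - q‖]
  rw [dist_comm, dist_eq_norm, dist_eq_norm]
  exact (pow_le_pow_iff_left₀ (norm_nonneg _) (norm_nonneg _) two_ne_zero).1 hsq

lemma lineMap_mem_segment_lineMap (x y : E) {a u b : ℝ} (hau : a ≤ u) (hub : u ≤ b) :
    lineMap x y u ∈ segment ℝ (lineMap x y a) (lineMap x y b) := by
  rw [← image_segment, segment_eq_Icc (hau.trans hub)]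
  exact mem_image_of_mem _ ⟨hau, hub⟩

theorem dist_lineMap_le_two_mul {x y a b : E} {ta tb u₀ u₁ r : ℝ} (hta : ta ∈ Icc (0 : ℝ) 1)
    (ha : ∀ u ∈ Icc (0 : ℝ) 1, dist a (lineMap x y ta) ≤ dist a (lineMap x y u))
    (hb : ∀ u ∈ Icc (0 : ℝ) 1, dist b (lineMap x y tb) ≤ dist b (lineMap x y u))
    (htab : tb ≤ ta) (hu₀ : u₀ ∈ Icc (0 : ℝ) 1) (hu : u₀ ≤ u₁) (hu₁ : u₁ ∈ Icc (0 : ℝ) 1)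
    (h₀ : dist a (lineMap x y u₀) ≤ r) (h₁ : dist b (lineMap x y u₁) ≤ r) :
    dist b (lineMap x y ta) ≤ 2 * r := by
  have hr : 0 ≤ r := dist_nonneg.trans h₁
  rcases le_or_gt ta u₁ with hle | hlt
  · calc dist b (lineMap x y ta) ≤ dist b (lineMap x y u₁) :=
          dist_le_of_mem_segment (hb u₁ hu₁) (lineMap_mem_segment_lineMap x y htab hle)
      _ ≤ 2 * r := by linarith
  · have hconvex : Convex ℝ (lineMap x y '' Icc (0 : ℝ) 1) :=
      segment_eq_image_lineMap ℝ x y ▸ convex_segment x y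
    have hproj : dist (lineMap x y u₀) (lineMap x y ta) ≤ r := by
      rw [dist_comm]
      exact (hconvex.dist_le_of_forall_dist_le (mem_image_of_mem _ hta)
        (forall_mem_image.2 ha) (mem_image_of_mem _ hu₀)).trans h₀
    have hcloser : dist (lineMap x y u₁) (lineMap x y ta) ≤
        dist (lineMap x y u₀) (lineMap x y ta) := by
      rw [dist_lineMap_lineMap, dist_lineMap_lineMap, Real.dist_eq, Real.dist_eq,
        abs_of_neg (by linarith), abs_of_neg (by linarith)]
      gcongr
    calc dist b (lineMap x y ta)
        ≤ dist b (lineMap x y u₁) + dist (lineMap x y u₁) (lineMap x y ta) := dist_triangle _ _ _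
      _ ≤ 2 * r := by linarith

end NearestPoint

namespace Traversal

variable {a b c e : ℝ}

def affine (hab : a ≤ b) (hce : c ≤ e) : Traversal a b c e where
  α u := a + u * (b - a)
  β u := c + u * (e - c)
  contα := by fun_prop
  monoα _ _ _ _ h := (add_le_add_iff_left a).2 (mul_le_mul_of_nonneg_right h (sub_nonneg.2 hab))
  α0 := by ring
  α1 := by ring
  contβ := by fun_prop
  monoβ _ _ _ _ h := (add_le_add_iff_left c).2 (mul_le_mul_of_nonneg_right h (sub_nonneg.2 hce))
  β0 := by ring
  β1 := by ring

lemma β_mem_Icc (T : Traversal a b c e) {u : ℝ} (hu : u ∈ Icc (0 : ℝ) 1) : T.β u ∈ Icc c e :=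
  ⟨T.β0.symm.le.trans (T.monoβ (left_mem_Icc.2 zero_le_one) hu hu.1),
    (T.monoβ hu (right_mem_Icc.2 zero_le_one) hu.2).trans T.β1.le⟩

lemma exists_α_eq_α_eq (T : Traversal a b c e) {x y : ℝ} (hx : a ≤ x) (hxy : x ≤ y)
    (hy : y ≤ b) :
    ∃ s₀ ∈ Icc (0 : ℝ) 1, ∃ s₁ ∈ Icc (0 : ℝ) 1, s₀ ≤ s₁ ∧ T.α s₀ = x ∧ T.α s₁ = y := by
  obtain ⟨s₁, hs₁, hα₁⟩ := intermediate_value_Icc zero_le_one T.contα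
    (show y ∈ Icc (T.α 0) (T.α 1) by rw [T.α0, T.α1]; exact ⟨hx.trans hxy, hy⟩)
  obtain ⟨s₀, hs₀, hα₀⟩ := intermediate_value_Icc hs₁.1
    (T.contα.mono (Icc_subset_Icc_right hs₁.2))
    (show x ∈ Icc (T.α 0) (T.α s₁) by rw [T.α0, hα₁]; exact ⟨hx, hxy⟩)
  exact ⟨s₀, ⟨hs₀.1, hs₀.2.trans hs₁.2⟩, s₁, hs₁, hs₀.2, hα₀, hα₁⟩

end Traversal

-- Without `hbdd` the set defining `frechet` could be empty, and `sInf ∅ = 0`.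
lemma le_frechet {d : ℕ} {a b c e x : ℝ} {f g : ℝ → EuclideanSpace ℝ (Fin d)}
    (hbdd : ∃ (T : Traversal a b c e) (r : ℝ), ∀ t ∈ Icc (0 : ℝ) 1,
      dist (f (T.α t)) (g (T.β t)) ≤ r)
    (h : ∀ (T : Traversal a b c e) (r : ℝ),
      (∀ t ∈ Icc (0 : ℝ) 1, dist (f (T.α t)) (g (T.β t)) ≤ r) → x ≤ r) :
    x ≤ frechet a b c e f g :=
  le_csInf (let ⟨T, r, hr⟩ := hbdd; ⟨r, T, hr⟩) fun r ⟨T, hT⟩ => h T r hT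

section Interp

variable {d n : ℕ} (p : Fin (n + 1) → EuclideanSpace ℝ (Fin d))

lemma interp_natCast (k : Fin (n + 1)) : interp p (k : ℕ) = p k := by
  simp only [interp, Int.fract_natCast, Int.floor_natCast, Int.toNat_natCast, sub_zero, one_smul,
    zero_smul, add_zero, min_eq_left (Fin.is_le k)]

lemma interp_mem_convexHull (u : ℝ) : interp p u ∈ convexHull ℝ (range p) :=
  convex_convexHull ℝ _ (subset_convexHull ℝ _ (mem_range_self _))
    (subset_convexHull ℝ _ (mem_range_self _)) (sub_nonneg.2 (Int.fract_lt_one u).le)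
    (Int.fract_nonneg u) (sub_add_cancel 1 _)

lemma exists_traversal_dist_interp_lineMap_le :
    ∃ (T : Traversal 0 n 0 1) (r : ℝ), ∀ u ∈ Icc (0 : ℝ) 1,
      dist (interp p (T.α u)) (lineMap (p 0) (p (Fin.last n)) (T.β u)) ≤ r := by
  refine ⟨.affine n.cast_nonneg zero_le_one, Metric.diam (convexHull ℝ (range p)),
    fun u hu => Metric.dist_le_diam_of_mem ?_ (interp_mem_convexHull p _) ?_⟩
  · exact isBounded_convexHull.2 (finite_range p).isBounded
  · exact segment_subset_convexHull (mem_range_self _) (mem_range_self _)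
      (lineMap_mem_segment ℝ _ _ (by simpa [Traversal.affine] using hu))

end Interp

/-- the greedy monotone matching, matching `p k` to the point of
the segment at parameter `max_{k' ≤ k} t k'` (running maximum of the nearest-point
projection parameters), realises a distance at most twice the Fréchet distance
between the curve and the segment. -/
theorem greedy_matching_two_approx {d n : ℕ}
    (p : Fin (n+1) → EuclideanSpace ℝ (Fin d))
    (t : Fin (n+1) → ℝ)
    (hrange : ∀ k, t k ∈ Set.Icc (0:ℝ) 1)
    (hproj : ∀ k, ∀ u ∈ Set.Icc (0:ℝ) 1,
      dist (p k) (p 0 + t k • (p (Fin.last n) - p 0)) ≤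
        dist (p k) (p 0 + u • (p (Fin.last n) - p 0))) :
    ∀ k : Fin (n+1),
      dist (p k) (p 0 + ((Finset.Iic k).sup' Finset.nonempty_Iic t) • (p (Fin.last n) - p 0))
        ≤ 2 * frechet 0 (n : ℝ) 0 1 (interp p)
            (fun u : ℝ => p 0 + u • (p (Fin.last n) - p 0)) := by
  intro k
  have hL (u : ℝ) : p 0 + u • (p (Fin.last n) - p 0) = lineMap (p 0) (p (Fin.last n)) u := by
    rw [lineMap_apply_module', add_comm]
  simp only [hL] at hproj ⊢
  obtain ⟨k₀, hk₀, hmax⟩ := Finset.exists_mem_eq_sup' Finset.nonempty_Iic t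
  have htk : t k ≤ t k₀ := hmax ▸ Finset.le_sup' t (Finset.mem_Iic.2 le_rfl)
  rw [hmax, ← div_le_iff₀' two_pos]
  refine le_frechet (exists_traversal_dist_interp_lineMap_le p) fun T r hT => ?_
  obtain ⟨s₀, hs₀, s₁, hs₁, hs, hα₀, hα₁⟩ := T.exists_α_eq_α_eq (Nat.cast_nonneg k₀)
    (Nat.cast_le.2 (Fin.le_iff_val_le_val.1 (Finset.mem_Iic.1 hk₀))) (Nat.cast_le.2 (Fin.is_le k))
  rw [div_le_iff₀' two_pos]
  refine dist_lineMap_le_two_mul (hrange k₀) (hproj k₀) (hproj k) htk (T.β_mem_Icc hs₀)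
    (T.monoβ hs₀ hs₁ hs) (T.β_mem_Icc hs₁) ?_ ?_
  · simpa only [hα₀, interp_natCast] using hT s₀ hs₀
  · simpa only [hα₁, interp_natCast] using hT s₁ hs₁
end

section
/- Weighted lower bound for lossless simplification: let π, σ be curves with vertex-restricted simplifications π̄, σ̄, and let w_π̄, w_σ̄ assign to each edge of the simplifications a non-positive weight whose absolute value is at least the Fréchet distance between that edge and its corresponding subcurve of the original. Then the additively weighted Fréchet distance satisfies D_F^w(π̄, σ̄) ≤ D_F(π, σ). -/
/-- The Fréchet distance with additive edge weights `w1`, `w2` on the two curves. -/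
noncomputable def frechetW {d : ℕ} (a b c e : ℝ) (f g : ℝ → EuclideanSpace ℝ (Fin d))
    (w1 w2 : ℝ → ℝ) : ℝ :=
  sInf {r | ∃ T : Traversal a b c e, ∀ t ∈ Set.Icc (0:ℝ) 1,
    dist (f (T.α t)) (g (T.β t)) + w1 (T.α t) + w2 (T.β t) ≤ r}

/-!
Fix a traversal of `π` and `σ`. Each edge `j` of `π̄` has Fréchet distance `δⱼ` to its subcurve
of `π`. Perturbing a near-optimal traversal of the two so that it becomes strictly monotone and
inverting its second component gives a monotone reparametrisation of the subcurve onto the edge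
that moves no point by more than `δⱼ + ε`. Since the weight is at most `-δⱼ` inside the edge and
vanishes at the vertices, where the two curves agree, gluing these maps yields `F` from the
parameters of `π` to those of `π̄` with `|π̄(F x) π(x)| + w(F x) ≤ ε`. Composing the traversal with
`F` and the analogous map for `σ` gives a traversal of `π̄` and `σ̄` whose weighted cost exceeds
the original cost by at most `2ε`, by the triangle inequality.
-/

open Set Topology

lemma strictMono_add_mul_sub {a b : ℝ} (hab : a < b) : StrictMono fun t : ℝ => a + t * (b - a) :=
  fun _ _ hst => by simp only; nlinarith

lemma StrictMonoOn.lerp {u v : ℝ → ℝ} {s : Set ℝ} {η : ℝ} (hv : StrictMonoOn v s)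
    (hu : MonotoneOn u s) (hη : η ∈ Ioc (0 : ℝ) 1) :
    StrictMonoOn (fun t => (1 - η) * u t + η * v t) s := fun _ hx _ hy hxy =>
  add_lt_add_of_le_of_lt (mul_le_mul_of_nonneg_left (hu hx hy hxy.le) (sub_nonneg.2 hη.2))
    (mul_lt_mul_of_pos_left (hv hx hy hxy) hη.1)

lemma Real.dist_lerp_le {x y a b η : ℝ} (hx : x ∈ Icc a b) (hy : y ∈ Icc a b) (hη : 0 ≤ η) :
    dist ((1 - η) * x + η * y) x ≤ η * (b - a) := by
  calc dist ((1 - η) * x + η * y) x = η * dist y x := by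
        rw [Real.dist_eq, Real.dist_eq, show (1 - η) * x + η * y - x = η * (y - x) by ring,
          abs_mul, abs_of_nonneg hη]
    _ ≤ η * (b - a) := mul_le_mul_of_nonneg_left (Real.dist_le_of_mem_Icc hy hx) hη

lemma StrictMonoOn.exists_continuous_inverse {h : ℝ → ℝ} {a b c e : ℝ} (hab : a ≤ b)
    (hh : StrictMonoOn h (Icc a b)) (hcont : ContinuousOn h (Icc a b)) (ha : h a = c)
    (hb : h b = e) :
    ∃ g : ℝ → ℝ, Continuous g ∧ Monotone g ∧ (∀ x, g x ∈ Icc a b) ∧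
      (∀ x ∈ Icc c e, h (g x) = x) ∧ (∀ x ≤ c, g x = a) ∧ ∀ x, e ≤ x → g x = b := by
  have hmem : ∀ u ∈ Icc a b, h u ∈ Icc c e := fun u hu =>
    ⟨ha ▸ hh.monotoneOn (left_mem_Icc.2 hab) hu hu.1,
      hb ▸ hh.monotoneOn hu (right_mem_Icc.2 hab) hu.2⟩
  have hce : c ≤ e := (hmem a (left_mem_Icc.2 hab)).2.trans' ha.ge
  let H : Icc a b → Icc c e := fun u => ⟨h u, hmem u u.2⟩
  have hH : StrictMono H := fun u v huv => hh u.2 v.2 huv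
  have hHs : Function.Surjective H := by
    rintro ⟨x, hx⟩
    obtain ⟨u, hu, rfl⟩ := intermediate_value_Icc hab hcont (ha ▸ hb ▸ hx)
    exact ⟨⟨u, hu⟩, rfl⟩
  let φ := hH.orderIsoOfSurjective H hHs
  have hφ : ∀ u : Icc a b, φ.symm ⟨h u, hmem u u.2⟩ = u :=
    hH.orderIsoOfSurjective_symm_apply_self H hHs
  refine ⟨fun x => φ.symm (projIcc c e hce x),
    continuous_subtype_val.comp (φ.symm.continuous.comp continuous_projIcc),
    fun x y hxy => φ.symm.monotone (monotone_projIcc hce hxy), fun x => (φ.symm _).2,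
    fun x hx => ?_, fun x hx => ?_, fun x hx => ?_⟩
  · simpa only [projIcc_of_mem hce hx] using
      congrArg Subtype.val (hH.orderIsoOfSurjective_self_symm_apply H hHs (projIcc c e hce x))
  · simp only [projIcc_of_le_left hce hx, ← ha, hφ ⟨a, left_mem_Icc.2 hab⟩]
  · simp only [projIcc_of_right_le hce hx, ← hb, hφ ⟨b, right_mem_Icc.2 hab⟩]

lemma Fin.eq_zero_or_exists_mem_Icc_castSucc_succ {α : Type*} [LinearOrder α] :
    ∀ {k : ℕ} (b : Fin (k + 1) → α) {x : α}, x ∈ Icc (b 0) (b (Fin.last k)) →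
      x = b 0 ∨ ∃ i : Fin k, x ∈ Icc (b i.castSucc) (b i.succ)
  | 0, b, x, hx => Or.inl (le_antisymm hx.2 hx.1)
  | k + 1, b, x, hx => by
    by_cases hxk : x ≤ b (Fin.last k).castSucc
    · rcases Fin.eq_zero_or_exists_mem_Icc_castSucc_succ (b ∘ Fin.castSucc) ⟨hx.1, hxk⟩
        with h | ⟨i, hi⟩
      · exact Or.inl h
      · exact Or.inr ⟨i.castSucc, by rwa [Fin.succ_castSucc]⟩
    · exact Or.inr ⟨Fin.last k, (not_le.1 hxk).le, by simpa using hx.2⟩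

lemma Fin.sum_eq_of_mem_Icc_castSucc_succ {α : Type*} [Preorder α] {k : ℕ}
    {b : Fin (k + 1) → α} (hb : Monotone b) {ψ : Fin k → α → ℝ}
    (hψ0 : ∀ j x, x ≤ b j.castSucc → ψ j x = 0) (hψ1 : ∀ j x, b j.succ ≤ x → ψ j x = 1)
    {i : Fin k} {x : α} (hx : x ∈ Icc (b i.castSucc) (b i.succ)) :
    ∑ j, ψ j x = i + ψ i x := by
  have h : ∀ j, ψ j x = (if j < i then 1 else 0) + if j = i then ψ i x else 0 := by
    intro j
    rcases lt_trichotomy j i with hji | rfl | hij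
    · rw [hψ1 j x ((hb (Fin.succ_le_castSucc_iff.2 hji)).trans hx.1)]
      simp [hji, hji.ne]
    · simp
    · rw [hψ0 j x (hx.2.trans (hb (Fin.succ_le_castSucc_iff.2 hij)))]
      simp [hij.ne', not_lt.2 hij.le]
  rw [Finset.sum_congr rfl fun j _ => h j, Finset.sum_add_distrib, Finset.sum_ite_eq',
    Finset.sum_boole, Finset.filter_gt_eq_Iio, Fin.card_Iio, if_pos (Finset.mem_univ i)]

namespace Traversal

variable {a b c e : ℝ}

lemma α_mem (T : Traversal a b c e) {t : ℝ} (ht : t ∈ Icc (0 : ℝ) 1) : T.α t ∈ Icc a b := by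
  refine ⟨?_, ?_⟩
  · simpa only [T.α0] using T.monoα (left_mem_Icc.2 zero_le_one) ht ht.1
  · simpa only [T.α1] using T.monoα ht (right_mem_Icc.2 zero_le_one) ht.2

lemma β_mem (T : Traversal a b c e) {t : ℝ} (ht : t ∈ Icc (0 : ℝ) 1) : T.β t ∈ Icc c e := by
  refine ⟨?_, ?_⟩
  · simpa only [T.β0] using T.monoβ (left_mem_Icc.2 zero_le_one) ht ht.1
  · simpa only [T.β1] using T.monoβ ht (right_mem_Icc.2 zero_le_one) ht.2

def linear (hab : a ≤ b) (hce : c ≤ e) : Traversal a b c e where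
  α t := a + t * (b - a)
  β t := c + t * (e - c)
  contα := by fun_prop
  monoα _ _ _ _ hst := by simp only; nlinarith
  α0 := by ring
  α1 := by ring
  contβ := by fun_prop
  monoβ _ _ _ _ hst := by simp only; nlinarith
  β0 := by ring
  β1 := by ring

def lerp (T S : Traversal a b c e) {η : ℝ} (hη : η ∈ Icc (0 : ℝ) 1) : Traversal a b c e where
  α t := (1 - η) * T.α t + η * S.α t
  β t := (1 - η) * T.β t + η * S.β t
  contα := (continuousOn_const.mul T.contα).add (continuousOn_const.mul S.contα)
  monoα _ hs _ ht hst := add_le_add (mul_le_mul_of_nonneg_left (T.monoα hs ht hst)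
    (sub_nonneg.2 hη.2)) (mul_le_mul_of_nonneg_left (S.monoα hs ht hst) hη.1)
  α0 := by simp only [T.α0, S.α0]; ring
  α1 := by simp only [T.α1, S.α1]; ring
  contβ := (continuousOn_const.mul T.contβ).add (continuousOn_const.mul S.contβ)
  monoβ _ hs _ ht hst := add_le_add (mul_le_mul_of_nonneg_left (T.monoβ hs ht hst)
    (sub_nonneg.2 hη.2)) (mul_le_mul_of_nonneg_left (S.monoβ hs ht hst) hη.1)
  β0 := by simp only [T.β0, S.β0]; ring
  β1 := by simp only [T.β1, S.β1]; ring

def map (T : Traversal a b c e) {F G : ℝ → ℝ} (hF : Continuous F) (hFm : Monotone F)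
    (hG : Continuous G) (hGm : Monotone G) {a' b' c' e' : ℝ} (ha : F a = a') (hb : F b = b')
    (hc : G c = c') (he : G e = e') : Traversal a' b' c' e' where
  α := F ∘ T.α
  β := G ∘ T.β
  contα := hF.comp_continuousOn T.contα
  monoα _ hs _ ht hst := hFm (T.monoα hs ht hst)
  α0 := by rw [Function.comp_apply, T.α0, ha]
  α1 := by rw [Function.comp_apply, T.α1, hb]
  contβ := hG.comp_continuousOn T.contβ
  monoβ _ hs _ ht hst := hGm (T.monoβ hs ht hst)
  β0 := by rw [Function.comp_apply, T.β0, hc]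
  β1 := by rw [Function.comp_apply, T.β1, he]

end Traversal

section Frechet

variable {d : ℕ} {a b c e : ℝ} {f g : ℝ → EuclideanSpace ℝ (Fin d)}

lemma exists_traversal_dist_le_frechet_add (hab : a ≤ b) (hce : c ≤ e)
    (hf : ContinuousOn f (Icc a b)) (hg : ContinuousOn g (Icc c e)) {ε : ℝ} (hε : 0 < ε) :
    ∃ T : Traversal a b c e, ∀ t ∈ Icc (0 : ℝ) 1,
      dist (f (T.α t)) (g (T.β t)) ≤ frechet a b c e f g + ε := by
  set L := Traversal.linear hab hce
  have hcont : ContinuousOn (fun t => dist (f (L.α t)) (g (L.β t))) (Icc 0 1) :=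
    continuous_dist.comp_continuousOn
      ((hf.comp L.contα fun _ => L.α_mem).prodMk (hg.comp L.contβ fun _ => L.β_mem))
  obtain ⟨M, hM⟩ := (isCompact_Icc.image_of_continuousOn hcont).bddAbove
  have hne : ∃ r, ∃ T : Traversal a b c e, ∀ t ∈ Icc (0 : ℝ) 1,
      dist (f (T.α t)) (g (T.β t)) ≤ r :=
    ⟨M, L, fun t ht => hM (mem_image_of_mem _ ht)⟩
  obtain ⟨r, ⟨T, hT⟩, hr⟩ := Real.lt_sInf_add_pos hne hε
  exact ⟨T, fun t ht => (hT t ht).trans hr.le⟩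

lemma frechetW_le (T : Traversal a b c e) {w₁ w₂ : ℝ → ℝ} {r : ℝ}
    (hT : ∀ t ∈ Icc (0 : ℝ) 1, dist (f (T.α t)) (g (T.β t)) + w₁ (T.α t) + w₂ (T.β t) ≤ r) :
    frechetW a b c e f g w₁ w₂ ≤ r := by
  refine csInf_le ⟨w₁ a + w₂ c, ?_⟩ ⟨T, hT⟩
  rintro s ⟨S, hS⟩
  have h0 := hS 0 (left_mem_Icc.2 zero_le_one)
  rw [S.α0, S.β0] at h0
  linarith [dist_nonneg (x := f a) (y := g c)]

lemma exists_strictMono_traversal_dist_le_frechet_add (hab : a < b) (hce : c < e)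
    (hf : ContinuousOn f (Icc a b)) (hg : ContinuousOn g (Icc c e)) {ε : ℝ} (hε : 0 < ε) :
    ∃ T : Traversal a b c e, StrictMonoOn T.α (Icc 0 1) ∧ StrictMonoOn T.β (Icc 0 1) ∧
      ∀ t ∈ Icc (0 : ℝ) 1, dist (f (T.α t)) (g (T.β t)) ≤ frechet a b c e f g + ε := by
  have hε3 : 0 < ε / 3 := by positivity
  obtain ⟨T, hT⟩ := exists_traversal_dist_le_frechet_add hab.le hce.le hf hg hε3
  obtain ⟨δf, hδf, hf'⟩ := Metric.uniformContinuousOn_iff.1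
    (isCompact_Icc.uniformContinuousOn_of_continuous hf) _ hε3
  obtain ⟨δg, hδg, hg'⟩ := Metric.uniformContinuousOn_iff.1
    (isCompact_Icc.uniformContinuousOn_of_continuous hg) _ hε3
  -- a small step towards the linear traversal makes `T` strictly monotone at little cost
  have hsmall : ∀ᶠ η in 𝓝[>] (0 : ℝ), η ≤ 1 ∧ η * (b - a) < δf ∧ η * (e - c) < δg := by
    have h : ∀ K δ : ℝ, 0 < δ → ∀ᶠ η in 𝓝 (0 : ℝ), η * K < δ := fun K _ hδ =>
      ((continuous_mul_const K).tendsto' 0 0 (zero_mul K)).eventually_lt_const hδ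
    exact nhdsWithin_le_nhds ((eventually_le_nhds one_pos).and ((h _ _ hδf).and (h _ _ hδg)))
  obtain ⟨η, ⟨hη1, hηf, hηg⟩, hη0 : 0 < η⟩ := (hsmall.and self_mem_nhdsWithin).exists
  set L := Traversal.linear hab.le hce.le
  set S := T.lerp L ⟨hη0.le, hη1⟩
  refine ⟨S, ((strictMono_add_mul_sub hab).strictMonoOn _).lerp T.monoα ⟨hη0, hη1⟩,
    ((strictMono_add_mul_sub hce).strictMonoOn _).lerp T.monoβ ⟨hη0, hη1⟩, fun t ht => ?_⟩
  have hα : dist (f (S.α t)) (f (T.α t)) < ε / 3 := hf' _ (S.α_mem ht) _ (T.α_mem ht)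
    ((Real.dist_lerp_le (T.α_mem ht) (L.α_mem ht) hη0.le).trans_lt hηf)
  have hβ : dist (g (T.β t)) (g (S.β t)) < ε / 3 := by
    rw [dist_comm]
    exact hg' _ (S.β_mem ht) _ (T.β_mem ht)
      ((Real.dist_lerp_le (T.β_mem ht) (L.β_mem ht) hη0.le).trans_lt hηg)
  linarith [dist_triangle4 (f (S.α t)) (f (T.α t)) (g (T.β t)) (g (S.β t)), hT t ht]

lemma exists_reparam_dist_le_frechet_add (hab : a < b) (hce : c < e)
    (hf : ContinuousOn f (Icc a b)) (hg : ContinuousOn g (Icc c e)) {ε : ℝ} (hε : 0 < ε) :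
    ∃ F : ℝ → ℝ, Continuous F ∧ Monotone F ∧ (∀ x ≤ c, F x = a) ∧ (∀ x, e ≤ x → F x = b) ∧
      MapsTo F (Ioo c e) (Ioo a b) ∧
      ∀ x ∈ Icc c e, dist (f (F x)) (g x) ≤ frechet a b c e f g + ε := by
  obtain ⟨T, hα, hβ, hT⟩ := exists_strictMono_traversal_dist_le_frechet_add hab hce hf hg hε
  obtain ⟨G, hGc, hGm, hGmem, hGinv, hG0, hG1⟩ :=
    hβ.exists_continuous_inverse zero_le_one T.contβ T.β0 T.β1
  refine ⟨T.α ∘ G, T.contα.comp_continuous hGc hGmem,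
    fun x y hxy => T.monoα (hGmem x) (hGmem y) (hGm hxy),
    fun x hx => by rw [Function.comp_apply, hG0 x hx, T.α0],
    fun x hx => by rw [Function.comp_apply, hG1 x hx, T.α1], fun x hx => ?_, fun x hx => ?_⟩
  · have hGx := hGinv x (Ioo_subset_Icc_self hx)
    have hG : G x ∈ Ioo 0 1 :=
      ⟨(hGmem x).1.lt_of_ne fun h => hx.1.ne (by rw [← hGx, ← h, T.β0]),
        (hGmem x).2.lt_of_ne fun h => hx.2.ne (by rw [← hGx, h, T.β1])⟩
    exact ⟨T.α0.symm.trans_lt (hα (left_mem_Icc.2 zero_le_one) (hGmem x) hG.1),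
      (hα (hGmem x) (right_mem_Icc.2 zero_le_one) hG.2).trans_eq T.α1⟩
  · simpa only [Function.comp_apply, hGinv x hx] using hT (G x) (hGmem x)

end Frechet

section Interp

variable {d n : ℕ} (p : Fin (n + 1) → EuclideanSpace ℝ (Fin d))

lemma interp_natCast_s12 {j : ℕ} (hj : j ≤ n) : interp p j = p ⟨j, Nat.lt_succ_of_le hj⟩ := by
  simp only [interp, Int.fract_natCast, Int.floor_natCast, Int.toNat_natCast, min_eq_left hj,
    sub_zero, one_smul, zero_smul, add_zero]

lemma interp_val (i : Fin (n + 1)) : interp p (i : ℕ) = p i :=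
  interp_natCast_s12 p (Nat.lt_succ_iff.1 i.2)

lemma continuousOn_interp_Icc_succ {j : ℕ} (hj : j < n) :
    ContinuousOn (interp p) (Icc j (j + 1)) := by
  have hEq : EqOn (interp p) (fun t => (1 - (t - j)) • p ⟨j, by omega⟩ +
      (t - j) • p ⟨j + 1, by omega⟩) (Icc j (j + 1)) := by
    intro t ht
    rcases ht.2.eq_or_lt with rfl | hlt
    · rw [← Nat.cast_succ, interp_natCast_s12 p hj]
      simp
    · have hfl : ⌊t⌋ = j := Int.floor_eq_iff.2 ⟨mod_cast ht.1, mod_cast hlt⟩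
      have hfr : Int.fract t = t - j := by rw [Int.fract, hfl]; rfl
      simp only [interp, hfl, hfr, Int.toNat_natCast, min_eq_left hj.le,
        min_eq_left (Nat.succ_le_of_lt hj)]
  exact (Continuous.continuousOn (by fun_prop)).congr hEq

lemma continuousOn_interp : ContinuousOn (interp p) (Icc 0 n) := by
  suffices ∀ N ≤ n, ContinuousOn (interp p) (Icc 0 N) from this n le_rfl
  intro N hN
  induction N with
  | zero => simp
  | succ N ih =>
    rw [Nat.cast_succ, ← Icc_union_Icc_eq_Icc N.cast_nonneg (le_add_of_nonneg_right zero_le_one)]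
    exact (ih (by omega)).union_of_isClosed (continuousOn_interp_Icc_succ p (by omega))
      isClosed_Icc isClosed_Icc

lemma interp_comp_val {k : ℕ} (ι : Fin (k + 1) → Fin (n + 1)) (i : Fin (k + 1)) :
    interp (p ∘ ι) (i : ℕ) = interp p (ι i : ℕ) := by
  rw [interp_val, interp_val, Function.comp_apply]

end Interp

section Simplification

variable {d n k : ℕ} (p : Fin (n + 1) → EuclideanSpace ℝ (Fin d))
  (ι : Fin (k + 1) → Fin (n + 1)) (w : ℝ → ℝ)

lemma dist_interp_comp_val_add_eq_zero (hw0 : ∀ j : Fin (k + 1), w ((j : ℕ) : ℝ) = 0)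
    (i : Fin (k + 1)) : dist (interp (p ∘ ι) (i : ℕ)) (interp p (ι i : ℕ)) + w (i : ℕ) = 0 := by
  rw [interp_comp_val, dist_self, hw0, add_zero]

lemma exists_edge_reparam (hι : StrictMono ι) (hw0 : ∀ j : Fin (k + 1), w ((j : ℕ) : ℝ) = 0)
    (hw : ∀ j : Fin k, ∀ s ∈ Ioo ((j : ℕ) : ℝ) (((j : ℕ) : ℝ) + 1),
      w s ≤ - frechet ((j : ℕ) : ℝ) (((j : ℕ) : ℝ) + 1)
        (((ι j.castSucc : Fin (n + 1)) : ℕ) : ℝ) (((ι j.succ : Fin (n + 1)) : ℕ) : ℝ)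
        (interp (p ∘ ι)) (interp p))
    (j : Fin k) {ε : ℝ} (hε : 0 < ε) :
    ∃ Φ : ℝ → ℝ, Continuous Φ ∧ Monotone Φ ∧
      (∀ x ≤ ((ι j.castSucc : ℕ) : ℝ), Φ x = (j : ℕ)) ∧
      (∀ x, ((ι j.succ : ℕ) : ℝ) ≤ x → Φ x = (j : ℕ) + 1) ∧
      ∀ x ∈ Icc ((ι j.castSucc : ℕ) : ℝ) ((ι j.succ : ℕ) : ℝ),
        dist (interp (p ∘ ι) (Φ x)) (interp p x) + w (Φ x) ≤ ε := by
  have hce : ((ι j.castSucc : ℕ) : ℝ) < (ι j.succ : ℕ) := by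
    exact_mod_cast hι j.castSucc_lt_succ
  have hjk : (j : ℕ) + 1 ≤ (k : ℝ) := by exact_mod_cast j.2
  have hen : ((ι j.succ : ℕ) : ℝ) ≤ n := by exact_mod_cast Nat.lt_succ_iff.1 (ι j.succ).2
  obtain ⟨Φ, hΦc, hΦm, hΦ0, hΦ1, hΦmaps, hΦdist⟩ := exists_reparam_dist_le_frechet_add
    (lt_add_one _) hce ((continuousOn_interp _).mono (Icc_subset_Icc (Nat.cast_nonneg _) hjk))
    ((continuousOn_interp p).mono (Icc_subset_Icc (Nat.cast_nonneg _) hen)) hε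
  have hvertex := fun i => (dist_interp_comp_val_add_eq_zero p ι w hw0 i).trans_le hε.le
  refine ⟨Φ, hΦc, hΦm, hΦ0, hΦ1, fun x hx => ?_⟩
  rcases hx.1.eq_or_lt with rfl | hcx
  · rw [hΦ0 _ le_rfl]
    exact hvertex j.castSucc
  rcases hx.2.eq_or_lt with rfl | hxe
  · simpa [hΦ1 _ le_rfl] using hvertex j.succ
  linarith [hΦdist x hx, hw j (Φ x) (hΦmaps ⟨hcx, hxe⟩)]

lemma exists_reparam_of_simplification (hι : StrictMono ι) (hι0 : ι 0 = 0)
    (hι1 : ι (Fin.last k) = Fin.last n) (hw0 : ∀ j : Fin (k + 1), w ((j : ℕ) : ℝ) = 0)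
    (hw : ∀ j : Fin k, ∀ s ∈ Ioo ((j : ℕ) : ℝ) (((j : ℕ) : ℝ) + 1),
      w s ≤ - frechet ((j : ℕ) : ℝ) (((j : ℕ) : ℝ) + 1)
        (((ι j.castSucc : Fin (n + 1)) : ℕ) : ℝ) (((ι j.succ : Fin (n + 1)) : ℕ) : ℝ)
        (interp (p ∘ ι)) (interp p))
    {ε : ℝ} (hε : 0 < ε) :
    ∃ F : ℝ → ℝ, Continuous F ∧ Monotone F ∧ F 0 = 0 ∧ F n = k ∧
      ∀ x ∈ Icc 0 (n : ℝ), dist (interp (p ∘ ι) (F x)) (interp p x) + w (F x) ≤ ε := by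
  choose Φ hΦc hΦm hΦ0 hΦ1 hΦ using fun j => exists_edge_reparam p ι w hι hw0 hw j hε
  have hb : Monotone fun i : Fin (k + 1) => ((ι i : ℕ) : ℝ) :=
    fun _ _ hij => Nat.cast_le.2 (hι.monotone hij)
  have hglue : ∀ i : Fin k, ∀ x ∈ Icc ((ι i.castSucc : ℕ) : ℝ) ((ι i.succ : ℕ) : ℝ),
      ∑ j, (Φ j x - (j : ℕ)) = Φ i x := fun i x hx => by
    rw [Fin.sum_eq_of_mem_Icc_castSucc_succ hb (ψ := fun j x => Φ j x - (j : ℕ))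
      (fun j x hx => by rw [hΦ0 j x hx, sub_self]) (fun j x hx => by rw [hΦ1 j x hx]; ring) hx]
    ring
  have hF0 : ∑ j, (Φ j 0 - (j : ℕ)) = 0 :=
    Finset.sum_eq_zero fun j _ => by rw [hΦ0 j 0 (Nat.cast_nonneg _), sub_self]
  refine ⟨fun x => ∑ j, (Φ j x - (j : ℕ)), continuous_finsetSum _ fun j _ => (hΦc j).sub
    continuous_const, fun x y hxy => Finset.sum_le_sum fun j _ => sub_le_sub_right (hΦm j hxy) _,
    hF0, ?_, fun x hx => ?_⟩
  · have hn : ∀ j : Fin k, ((ι j.succ : ℕ) : ℝ) ≤ n := fun j => by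
      exact_mod_cast Nat.lt_succ_iff.1 (ι j.succ).2
    simp [hΦ1 _ _ (hn _)]
  have hx' : x ∈ Icc ((ι 0 : ℕ) : ℝ) ((ι (Fin.last k) : ℕ) : ℝ) := by simpa [hι0, hι1] using hx
  rcases Fin.eq_zero_or_exists_mem_Icc_castSucc_succ (fun i => ((ι i : ℕ) : ℝ)) hx'
    with rfl | ⟨i, hi⟩
  · simpa [hι0, hF0] using (dist_interp_comp_val_add_eq_zero p ι w hw0 0).trans_le hε.le
  · simp only [hglue i x hi]
    exact hΦ i x hi

end Simplification

theorem weighted_frechet_lower_bound_general {d n m k l : ℕ}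
    (p : Fin (n+1) → EuclideanSpace ℝ (Fin d))
    (q : Fin (m+1) → EuclideanSpace ℝ (Fin d))
    (ι : Fin (k+1) → Fin (n+1)) (κ : Fin (l+1) → Fin (m+1))
    (hι : StrictMono ι) (hκ : StrictMono κ)
    (hι0 : ι 0 = 0) (hι1 : ι (Fin.last k) = Fin.last n)
    (hκ0 : κ 0 = 0) (hκ1 : κ (Fin.last l) = Fin.last m)
    (wp wq : ℝ → ℝ)
    (hwp0 : ∀ j : Fin (k+1), wp ((j : ℕ) : ℝ) = 0)
    (hwq0 : ∀ j : Fin (l+1), wq ((j : ℕ) : ℝ) = 0)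
    (hwp : ∀ j : Fin k, ∀ s ∈ Set.Ioo ((j : ℕ) : ℝ) (((j : ℕ) : ℝ) + 1),
      wp s ≤ - frechet ((j : ℕ) : ℝ) (((j : ℕ) : ℝ) + 1)
        (((ι j.castSucc : Fin (n+1)) : ℕ) : ℝ) (((ι j.succ : Fin (n+1)) : ℕ) : ℝ)
        (interp (p ∘ ι)) (interp p))
    (hwq : ∀ j : Fin l, ∀ s ∈ Set.Ioo ((j : ℕ) : ℝ) (((j : ℕ) : ℝ) + 1),
      wq s ≤ - frechet ((j : ℕ) : ℝ) (((j : ℕ) : ℝ) + 1)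
        (((κ j.castSucc : Fin (m+1)) : ℕ) : ℝ) (((κ j.succ : Fin (m+1)) : ℕ) : ℝ)
        (interp (q ∘ κ)) (interp q)) :
    frechetW 0 (k : ℝ) 0 (l : ℝ) (interp (p ∘ ι)) (interp (q ∘ κ)) wp wq ≤
      frechet 0 (n : ℝ) 0 (m : ℝ) (interp p) (interp q) := by
  refine le_of_forall_pos_le_add fun δ hδ => ?_
  have hδ4 : 0 < δ / 4 := by positivity
  obtain ⟨T, hT⟩ := exists_traversal_dist_le_frechet_add n.cast_nonneg m.cast_nonneg
    (continuousOn_interp p) (continuousOn_interp q) (half_pos hδ)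
  obtain ⟨F, hFc, hFmono, hF0, hFn, hF⟩ :=
    exists_reparam_of_simplification p ι wp hι hι0 hι1 hwp0 hwp hδ4
  obtain ⟨G, hGc, hGmono, hG0, hGl, hG⟩ :=
    exists_reparam_of_simplification q κ wq hκ hκ0 hκ1 hwq0 hwq hδ4
  refine frechetW_le (T.map hFc hFmono hGc hGmono hF0 hFn hG0 hGl) fun t ht => ?_
  dsimp only [Traversal.map, Function.comp_apply]
  linarith [hT t ht, hF _ (T.α_mem ht), hG _ (T.β_mem ht),
    dist_triangle4 (interp (p ∘ ι) (F (T.α t))) (interp p (T.α t)) (interp q (T.β t))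
      (interp (q ∘ κ) (G (T.β t))), dist_comm (interp q (T.β t)) (interp (q ∘ κ) (G (T.β t)))]

/-- weighted lower bound for lossless simplification.  If `p ∘ ι`
and `q ∘ κ` are vertex-restricted simplifications of `p` and `q`, and the
non-positive edge weights dominate (in absolute value) the Fréchet distance of
each simplification edge to its corresponding subcurve, then the additively
weighted Fréchet distance of the simplifications is a lower bound on the
Fréchet distance of the original curves. -/
theorem weighted_frechet_lower_bound {d n m k l : ℕ}
    (p : Fin (n+1) → EuclideanSpace ℝ (Fin d))
    (q : Fin (m+1) → EuclideanSpace ℝ (Fin d))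
    (ι : Fin (k+1) → Fin (n+1)) (κ : Fin (l+1) → Fin (m+1))
    (hι : StrictMono ι) (hκ : StrictMono κ)
    (hι0 : ι 0 = 0) (hι1 : ι (Fin.last k) = Fin.last n)
    (hκ0 : κ 0 = 0) (hκ1 : κ (Fin.last l) = Fin.last m)
    (wp wq : ℝ → ℝ)
    (hwpneg : ∀ s, wp s ≤ 0) (hwqneg : ∀ s, wq s ≤ 0)
    (hwp0 : ∀ j : Fin (k+1), wp ((j : ℕ) : ℝ) = 0)
    (hwq0 : ∀ j : Fin (l+1), wq ((j : ℕ) : ℝ) = 0)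
    (hwp : ∀ j : Fin k, ∀ s ∈ Set.Ioo ((j : ℕ) : ℝ) (((j : ℕ) : ℝ) + 1),
      wp s ≤ - frechet ((j : ℕ) : ℝ) (((j : ℕ) : ℝ) + 1)
        (((ι j.castSucc : Fin (n+1)) : ℕ) : ℝ) (((ι j.succ : Fin (n+1)) : ℕ) : ℝ)
        (interp (p ∘ ι)) (interp p))
    (hwq : ∀ j : Fin l, ∀ s ∈ Set.Ioo ((j : ℕ) : ℝ) (((j : ℕ) : ℝ) + 1),
      wq s ≤ - frechet ((j : ℕ) : ℝ) (((j : ℕ) : ℝ) + 1)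
        (((κ j.castSucc : Fin (m+1)) : ℕ) : ℝ) (((κ j.succ : Fin (m+1)) : ℕ) : ℝ)
        (interp (q ∘ κ)) (interp q)) :
    frechetW 0 (k : ℝ) 0 (l : ℝ) (interp (p ∘ ι)) (interp (q ∘ κ)) wp wq ≤
      frechet 0 (n : ℝ) 0 (m : ℝ) (interp p) (interp q) :=
  weighted_frechet_lower_bound_general p q ι κ hι hκ hι0 hι1 hκ0 hκ1 wp wq hwp0 hwq0 hwp hwq
end
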